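/- Let l be a prime and let b1, b2 be nonzero squarefree integers all of whose prime factors lie in S = {2, q} ∪ {primes dividing n}. Suppose (z1, z2, z3) is an l-adic solution of the homogeneous space attached to (b1, b2) with z3 ≠ 0 and v_l(z3) < 0. If l does not divide n, or if l divides n but l^2 does not divide b1·b2, then v_l(z1) = v_l(z3). -/

import Mathlib

/-!
Put `A = b1 z1²` and `B = b1 b2 z3²`, so that `A = B - 2^m`. As `b1, b2` are squarefree,
`v(B) = v(b1) + v(b2) + 2 v(z3) ≤ 0`, and in fact `v(B) < v(2^m)`: for `l = 2` because `m > 0`;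
for odd `l` because `v(B) = 0` forces `l ∣ b1`, `l ∣ b2`, hence `l ∤ n` and so `l = q`, and then
`B - b2 z2² = 2^m (n² + 1) = 2^(m+1) q` has valuation `1`, so that `v(b2 z2²) = 0`, although
`v(b2 z2²) = 1 + 2 v(z2)` is odd. Hence `v(A) = v(B)`, i.e. `2 v(z1) = v(b2) + 2 v(z3)`, and
parity forces `v(b2) = 0` and `v(z1) = v(z3)`.
-/

/-- A `K`-solution of the homogeneous space attached to the pair `(b1, b2)`:
a triple `(z1, z2, z3)` in `K^3` with `z1 ≠ 0`, `z2 ≠ 0`, satisfying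
`b1·z1² − b2·z2² = 2^m·n²` and `b1·z1² − b1·b2·z3² = −2^m`. -/
def HSol (K : Type*) [Field K] (m n : ℕ) (b1 b2 : ℤ) (z1 z2 z3 : K) : Prop :=
  z1 ≠ 0 ∧ z2 ≠ 0 ∧
    (b1 : K) * z1 ^ 2 - (b2 : K) * z2 ^ 2 = 2 ^ m * (n : K) ^ 2 ∧
    (b1 : K) * z1 ^ 2 - (b1 : K) * (b2 : K) * z3 ^ 2 = -(2 ^ m)

namespace Padic

variable {p : ℕ} [Fact p.Prime]

@[simp]
lemma valuation_neg (x : ℚ_[p]) : (-x).valuation = x.valuation := by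
  rcases eq_or_ne x 0 with rfl | hx
  · simp
  · have h := valuation_mul (neg_ne_zero.mpr hx) (neg_ne_zero.mpr hx)
    rw [neg_mul_neg, valuation_mul hx hx] at h
    omega

lemma valuation_add_of_lt {x y : ℚ_[p]} (hx : x ≠ 0) (h : x.valuation < y.valuation) :
    (x + y).valuation = x.valuation := by
  have hxy : x + y ≠ 0 := fun h0 => by
    rw [← eq_neg_iff_add_eq_zero] at h0
    rw [h0, valuation_neg] at h
    exact lt_irrefl _ h
  have h1 := le_valuation_add hxy
  have h2 := le_valuation_add (x := x + y) (y := -y) (by simpa using hx)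
  rw [add_neg_cancel_right, valuation_neg] at h2
  omega

lemma valuation_sub_of_lt {x y : ℚ_[p]} (hx : x ≠ 0) (h : x.valuation < y.valuation) :
    (x - y).valuation = x.valuation := by
  rw [sub_eq_add_neg]
  exact valuation_add_of_lt hx (by rwa [valuation_neg])

lemma valuation_intCast_mul {b : ℤ} (hb : b ≠ 0) {x : ℚ_[p]} (hx : x ≠ 0) :
    ((b : ℚ_[p]) * x).valuation = padicValInt p b + x.valuation := by
  rw [valuation_mul (Int.cast_ne_zero.mpr hb) hx, valuation_intCast]

lemma valuation_intCast_mul_sq {b : ℤ} (hb : b ≠ 0) {z : ℚ_[p]} (hz : z ≠ 0) :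
    ((b : ℚ_[p]) * z ^ 2).valuation = padicValInt p b + 2 * z.valuation := by
  rw [valuation_intCast_mul hb (pow_ne_zero 2 hz), valuation_pow, Nat.cast_ofNat]

lemma valuation_intCast_mul_intCast_mul_sq {b1 b2 : ℤ} (hb1 : b1 ≠ 0) (hb2 : b2 ≠ 0)
    {z : ℚ_[p]} (hz : z ≠ 0) :
    ((b1 : ℚ_[p]) * b2 * z ^ 2).valuation =
      padicValInt p b1 + padicValInt p b2 + 2 * z.valuation := by
  rw [mul_assoc, valuation_intCast_mul hb1 (mul_ne_zero (Int.cast_ne_zero.mpr hb2)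
    (pow_ne_zero 2 hz)), valuation_intCast_mul_sq hb2 hz, add_assoc]

end Padic

lemma padicValInt_le_one_of_squarefree {p : ℕ} [hp : Fact p.Prime] {b : ℤ} (hb : Squarefree b) :
    padicValInt p b ≤ 1 := by
  rw [padicValInt, ← Nat.factorization_def _ hp.out]
  exact (Int.squarefree_natAbs.mpr hb).natFactorization_le_one p

lemma HSol.mul_mul_sq_sub_mul_sq {K : Type*} [Field K] {m n : ℕ} {b1 b2 : ℤ} {z1 z2 z3 : K}
    (h : HSol K m n b1 b2 z1 z2 z3) :
    (b1 : K) * b2 * z3 ^ 2 - b2 * z2 ^ 2 = 2 ^ m * ((n : K) ^ 2 + 1) := by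
  linear_combination h.2.2.1 - h.2.2.2

section PadicSolution

open Padic

variable {l : ℕ} [Fact l.Prime] {m n q : ℕ} {b1 b2 : ℤ} {z1 z2 z3 : ℚ_[l]}

lemma HSol.valuation_lt_zero_of_ne_two (hsol : HSol ℚ_[l] m n b1 b2 z1 z2 z3) (hl : l ≠ 2)
    (hnq : n ^ 2 + 1 = 2 * q) (hb1 : Squarefree b1) (hb2 : Squarefree b2)
    (hb1S : ∀ p : ℕ, p.Prime → (p : ℤ) ∣ b1 → p = 2 ∨ p = q ∨ p ∣ n)
    (hcase : (l : ℤ) ^ 2 ∣ b1 * b2 → ¬ l ∣ n) (hz3 : z3 ≠ 0) (hv3 : z3.valuation < 0) :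
    ((b1 : ℚ_[l]) * b2 * z3 ^ 2).valuation < 0 := by
  have hα := padicValInt_le_one_of_squarefree (p := l) hb1
  have hβ := padicValInt_le_one_of_squarefree (p := l) hb2
  have hvB := valuation_intCast_mul_intCast_mul_sq hb1.ne_zero hb2.ne_zero hz3
  by_contra! hB
  have hdvd1 : (l : ℤ) ∣ b1 := by
    by_contra h
    have := padicValInt.eq_zero_of_not_dvd h
    omega
  have hdvd2 : (l : ℤ) ∣ b2 := by
    by_contra h
    have := padicValInt.eq_zero_of_not_dvd h
    omega
  have hln : ¬ l ∣ n := hcase (sq (l : ℤ) ▸ mul_dvd_mul hdvd1 hdvd2)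
  obtain rfl : l = q := by
    rcases hb1S l Fact.out hdvd1 with h | h | h
    exacts [absurd h hl, h, absurd h hln]
  have hW : ((2 : ℚ_[l]) ^ m * ((n : ℚ_[l]) ^ 2 + 1)).valuation = 1 := by
    have : (n : ℚ_[l]) ^ 2 + 1 = 2 * l := by exact_mod_cast hnq
    rw [this, valuation_mul (by simp) (by simp [(Fact.out : l.Prime).ne_zero]),
      valuation_mul (by simp) (by simp [(Fact.out : l.Prime).ne_zero])]
    simp [padicValNat_primes hl]
  have hBne : (b1 : ℚ_[l]) * b2 * z3 ^ 2 ≠ 0 := by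
    have := hb1.ne_zero; have := hb2.ne_zero
    positivity
  have hvC := valuation_sub_of_lt hBne (y := 2 ^ m * ((n : ℚ_[l]) ^ 2 + 1)) (by omega)
  rw [← hsol.mul_mul_sq_sub_mul_sq, sub_sub_cancel,
    valuation_intCast_mul_sq hb2.ne_zero hsol.2.1] at hvC
  omega

lemma HSol.valuation_lt_valuation_two_pow (hsol : HSol ℚ_[l] m n b1 b2 z1 z2 z3) (hm : 0 < m)
    (hnq : n ^ 2 + 1 = 2 * q) (hb1 : Squarefree b1) (hb2 : Squarefree b2)
    (hb1S : ∀ p : ℕ, p.Prime → (p : ℤ) ∣ b1 → p = 2 ∨ p = q ∨ p ∣ n)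
    (hcase : (l : ℤ) ^ 2 ∣ b1 * b2 → ¬ l ∣ n) (hz3 : z3 ≠ 0) (hv3 : z3.valuation < 0) :
    ((b1 : ℚ_[l]) * b2 * z3 ^ 2).valuation < ((2 : ℚ_[l]) ^ m).valuation := by
  by_cases hl : l = 2
  · subst hl
    have := padicValInt_le_one_of_squarefree (p := 2) hb1
    have := padicValInt_le_one_of_squarefree (p := 2) hb2
    rw [valuation_intCast_mul_intCast_mul_sq hb1.ne_zero hb2.ne_zero hz3]
    simp only [valuation_pow, valuation_ofNat, padicValNat_self]
    omega
  · simpa [padicValNat_primes hl] using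
      hsol.valuation_lt_zero_of_ne_two hl hnq hb1 hb2 hb1S hcase hz3 hv3

end PadicSolution

theorem stmt_2_general (m n q : ℕ) (hm : 0 < m)
    (hnq : n ^ 2 + 1 = 2 * q)
    (b1 b2 : ℤ)
    (hb1sf : Squarefree b1) (hb2sf : Squarefree b2)
    (hb1S : ∀ p : ℕ, Nat.Prime p → (p : ℤ) ∣ b1 → p = 2 ∨ p = q ∨ p ∣ n)
    (l : ℕ) [Fact (Nat.Prime l)]
    (z1 z2 z3 : ℚ_[l]) (hsol : HSol ℚ_[l] m n b1 b2 z1 z2 z3)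
    (hv3 : z3.valuation < 0)
    (hcase : ¬ l ∣ n ∨ (l ∣ n ∧ ¬ ((l : ℤ) ^ 2 ∣ b1 * b2))) :
    z1.valuation = z3.valuation := by
  have hz3 : z3 ≠ 0 := by
    rintro rfl
    simp at hv3
  have hBne : (b1 : ℚ_[l]) * b2 * z3 ^ 2 ≠ 0 := by
    have := hb1sf.ne_zero; have := hb2sf.ne_zero
    positivity
  have hlt := hsol.valuation_lt_valuation_two_pow hm hnq hb1sf hb2sf hb1S (by tauto) hz3 hv3
  have hA : (b1 : ℚ_[l]) * z1 ^ 2 = (b1 : ℚ_[l]) * b2 * z3 ^ 2 - 2 ^ m := by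
    linear_combination hsol.2.2.2
  have hvA := congrArg Padic.valuation hA
  rw [Padic.valuation_sub_of_lt hBne hlt, Padic.valuation_intCast_mul_sq hb1sf.ne_zero hsol.1,
    Padic.valuation_intCast_mul_intCast_mul_sq hb1sf.ne_zero hb2sf.ne_zero hz3] at hvA
  have := padicValInt_le_one_of_squarefree (p := l) hb2sf
  omega

theorem stmt_2 (m n q : ℕ) (hm : 0 < m) (hnpos : 0 < n) (hnodd : Odd n)
    (hnsf : Squarefree n) (hq : Nat.Prime q) (hqodd : Odd q)
    (hnq : n ^ 2 + 1 = 2 * q)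
    (b1 b2 : ℤ) (hb1 : b1 ≠ 0) (hb2 : b2 ≠ 0)
    (hb1sf : Squarefree b1) (hb2sf : Squarefree b2)
    (hb1S : ∀ p : ℕ, Nat.Prime p → (p : ℤ) ∣ b1 → p = 2 ∨ p = q ∨ p ∣ n)
    (hb2S : ∀ p : ℕ, Nat.Prime p → (p : ℤ) ∣ b2 → p = 2 ∨ p = q ∨ p ∣ n)
    (l : ℕ) [Fact (Nat.Prime l)]
    (z1 z2 z3 : ℚ_[l]) (hsol : HSol ℚ_[l] m n b1 b2 z1 z2 z3)
    (hz3 : z3 ≠ 0) (hv3 : z3.valuation < 0)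
    (hcase : ¬ l ∣ n ∨ (l ∣ n ∧ ¬ ((l : ℤ) ^ 2 ∣ b1 * b2))) :
    z1.valuation = z3.valuation :=
  stmt_2_general m n q hm hnq b1 b2 hb1sf hb2sf hb1S l z1 z2 z3 hsol hv3 hcase
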